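/- arXiv:1307.2105 — 5 statements merged into one kernel-verified Lean document; each statement's English description precedes it below -/
import Mathlib

section
/- Let SNR > 0, let H ∈ ℝ^{N×M}, and let A ∈ ℝ^{M×M} be any real matrix. The matrix SNR⁻¹·I_N + H·Hᵀ is positive definite, hence invertible, and for the filter B = A·Hᵀ·(SNR⁻¹·I_N + H·Hᵀ)⁻¹ one has the identity SNR·(B·H − A)·(B·H − A)ᵀ + B·Bᵀ = SNR·A·(I_M + SNR·Hᵀ·H)⁻¹·Aᵀ. -/
/-!
With `S = c⁻¹ • 1 + H * Hᵀ` and `T = 1 + c • (Hᵀ * H)`, the push-through identity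
`T * Hᵀ = c • (Hᵀ * S)` gives `Hᵀ * S⁻¹ = c • (T⁻¹ * Hᵀ)`, so the filter is
`B = c • (A * T⁻¹ * Hᵀ)` and its error is `B * H - A = -(A * T⁻¹)`. The two terms of the left-hand
side then combine into `c • (A * T⁻¹ * T * T⁻¹ * Aᵀ)`, using that `T` is symmetric.
-/

open Matrix

theorem Matrix.posDef_smul_one_add_smul_mul_transpose {m n : Type*} [Fintype m] [Fintype n]
    [DecidableEq m] {a b : ℝ} (ha : 0 < a) (hb : 0 ≤ b) (X : Matrix m n ℝ) :
    (a • 1 + b • (X * Xᵀ)).PosDef := by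
  have hXX : (X * Xᵀ).PosSemidef := by
    simpa [conjTranspose_eq_transpose_of_trivial] using posSemidef_self_mul_conjTranspose X
  exact (PosDef.one.smul ha).add_posSemidef (hXX.smul hb)

section Field

variable {K : Type*} [Field K] {l m n : Type*} [Fintype m] [Fintype n] [DecidableEq m]
  [DecidableEq n]

theorem Matrix.one_add_smul_mul_mul (c : K) (hc : c ≠ 0) (X : Matrix m n K) (Y : Matrix n m K) :
    (1 + c • (X * Y)) * X = c • (X * (c⁻¹ • 1 + Y * X)) := by
  rw [Matrix.mul_add, smul_add, Matrix.mul_smul, Matrix.mul_one, smul_smul,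
    mul_inv_cancel₀ hc, one_smul, Matrix.add_mul, Matrix.one_mul, Matrix.smul_mul,
    Matrix.mul_assoc]

theorem Matrix.mul_inv_inv_smul_one_add_mul (c : K) (hc : c ≠ 0) (X : Matrix m n K)
    (Y : Matrix n m K) (hS : IsUnit (c⁻¹ • 1 + Y * X)) (hT : IsUnit (1 + c • (X * Y))) :
    X * (c⁻¹ • 1 + Y * X)⁻¹ = c • ((1 + c • (X * Y))⁻¹ * X) := by
  set S := c⁻¹ • 1 + Y * X
  set T := 1 + c • (X * Y)
  calc X * S⁻¹ = T⁻¹ * ((T * X) * S⁻¹) := by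
        rw [Matrix.mul_assoc, nonsing_inv_mul_cancel_left _ _ ((isUnit_iff_isUnit_det T).1 hT)]
    _ = c • (T⁻¹ * X) := by
        rw [one_add_smul_mul_mul c hc, Matrix.smul_mul,
          mul_nonsing_inv_cancel_right _ _ ((isUnit_iff_isUnit_det S).1 hS), Matrix.mul_smul]

omit [DecidableEq n] in
theorem Matrix.smul_mul_transpose_add_smul_mul_transpose_mul (c : K) (G : Matrix l m K)
    (H : Matrix n m K) :
    c • (G * Gᵀ) + (c • (G * Hᵀ)) * (c • (G * Hᵀ))ᵀ = c • (G * (1 + c • (Hᵀ * H)) * Gᵀ) := by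
  simp only [transpose_smul, transpose_mul, transpose_transpose, Matrix.mul_add, Matrix.add_mul,
    Matrix.mul_smul, Matrix.smul_mul, smul_add, smul_smul, Matrix.mul_one, Matrix.mul_assoc]

theorem Matrix.mmse_filter_identity_of_isUnit (c : K) (hc : c ≠ 0) (H : Matrix n m K)
    (A : Matrix l m K) (hS : IsUnit (c⁻¹ • 1 + H * Hᵀ)) (hT : IsUnit (1 + c • (Hᵀ * H))) :
    let B := A * Hᵀ * (c⁻¹ • 1 + H * Hᵀ)⁻¹
    c • ((B * H - A) * (B * H - A)ᵀ) + B * Bᵀ = c • (A * (1 + c • (Hᵀ * H))⁻¹ * Aᵀ) := by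
  intro B
  set T := 1 + c • (Hᵀ * H)
  have hTdet : IsUnit T.det := (isUnit_iff_isUnit_det T).1 hT
  have hTinv_transpose : T⁻¹ᵀ = T⁻¹ := by
    simp [T, transpose_nonsing_inv, transpose_add, transpose_smul, transpose_mul]
  have hB : B = c • (A * T⁻¹ * Hᵀ) := by
    rw [Matrix.mul_assoc A T⁻¹, ← Matrix.mul_smul, ← mul_inv_inv_smul_one_add_mul c hc Hᵀ H hS hT,
      ← Matrix.mul_assoc]
  have hError : B * H - A = -(A * T⁻¹) := by
    have hBH : c • (A * T⁻¹ * Hᵀ) * H = A * T⁻¹ * (T - 1) := by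
      rw [add_sub_cancel_left, Matrix.smul_mul, Matrix.mul_smul, Matrix.mul_assoc]
    rw [hB, hBH, Matrix.mul_sub, Matrix.mul_assoc, nonsing_inv_mul _ hTdet, Matrix.mul_one,
      Matrix.mul_one, sub_sub_cancel_left]
  calc c • ((B * H - A) * (B * H - A)ᵀ) + B * Bᵀ
      = c • (A * T⁻¹ * (A * T⁻¹)ᵀ) + (c • (A * T⁻¹ * Hᵀ)) * (c • (A * T⁻¹ * Hᵀ))ᵀ := by
        rw [hError, hB, transpose_neg, Matrix.neg_mul, Matrix.mul_neg, neg_neg]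
    _ = c • (A * T⁻¹ * T * (A * T⁻¹)ᵀ) := smul_mul_transpose_add_smul_mul_transpose_mul c _ H
    _ = c • (A * T⁻¹ * Aᵀ) := by
        rw [transpose_mul, hTinv_transpose, nonsing_inv_mul_cancel_right _ _ hTdet,
          Matrix.mul_assoc]

end Field

theorem mmse_filter_identity {M N : ℕ} (SNR : ℝ) (hSNR : 0 < SNR)
    (H : Matrix (Fin N) (Fin M) ℝ) (A : Matrix (Fin M) (Fin M) ℝ) :
    (SNR⁻¹ • (1 : Matrix (Fin N) (Fin N) ℝ) + H * H.transpose).PosDef ∧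
    IsUnit (SNR⁻¹ • (1 : Matrix (Fin N) (Fin N) ℝ) + H * H.transpose) ∧
    (letI B := A * H.transpose * (SNR⁻¹ • (1 : Matrix (Fin N) (Fin N) ℝ) + H * H.transpose)⁻¹
     SNR • ((B * H - A) * (B * H - A).transpose) + B * B.transpose
       = SNR • (A * ((1 : Matrix (Fin M) (Fin M) ℝ) + SNR • (H.transpose * H))⁻¹ * A.transpose)) := by
  have hS : (SNR⁻¹ • (1 : Matrix (Fin N) (Fin N) ℝ) + H * Hᵀ).PosDef := by
    simpa using posDef_smul_one_add_smul_mul_transpose (inv_pos.2 hSNR) zero_le_one H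
  have hT : ((1 : Matrix (Fin M) (Fin M) ℝ) + SNR • (Hᵀ * H)).PosDef := by
    simpa using posDef_smul_one_add_smul_mul_transpose one_pos hSNR.le Hᵀ
  exact ⟨hS, hS.isUnit,
    mmse_filter_identity_of_isUnit SNR hSNR.ne' H A hS.isUnit hT.isUnit⟩
end

section
/- Let H ∈ ℝ^{N×M} and SNR > 0, let X ∈ ℝ^{M×n} and Z ∈ ℝ^{N×n} be zero-mean random matrices with generalized covariance matrices K̃_{XX} = SNR·I_M and K̃_{ZZ} = I_N and generalized cross-covariance K̃_{XZ} = 0, let A ∈ ℝ^{M×M}, set B = A·Hᵀ·(SNR⁻¹·I_N + H·Hᵀ)⁻¹, and define the effective noise Z_eff = (B·H − A)·X + B·Z. Then the generalized covariance matrix of the effective noise is K̃_{Z_eff Z_eff} = SNR·A·(I_M + SNR·Hᵀ·H)⁻¹·Aᵀ. -/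
/-!
The generalized cross-covariance is bilinear, `K̃(C X, D Y) = C K̃(X, Y) Dᵀ`, so the covariance of
`Z_eff = C X + B Z` with `C = B H - A` is `SNR C Cᵀ + B Bᵀ`, and what remains is a matrix identity.
With `S = SNR⁻¹ I + HᵀH`, which is positive definite, the push-through identity
`Hᵀ (SNR⁻¹ I + H Hᵀ)⁻¹ = S⁻¹ Hᵀ` turns `B` into `A S⁻¹ Hᵀ` and `C` into `-SNR⁻¹ A S⁻¹`; hence
`SNR C Cᵀ + B Bᵀ = A S⁻¹ S S⁻¹ Aᵀ = A S⁻¹ Aᵀ`, and `SNR (I + SNR HᵀH)⁻¹ = S⁻¹`.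
-/

open MeasureTheory

/-- Generalized cross-covariance matrix of two random matrices:
`{K̃_{XY}}_{ij} = (1/n) E⟨x_i, y_j⟩`. -/
noncomputable def genCrossCov {Ω : Type*} [MeasurableSpace Ω] (P : Measure Ω)
    {M N n : ℕ} (X : Ω → Matrix (Fin M) (Fin n) ℝ) (Y : Ω → Matrix (Fin N) (Fin n) ℝ) :
    Matrix (Fin M) (Fin N) ℝ :=
  Matrix.of fun i j => (n : ℝ)⁻¹ * ∫ ω, ∑ t, X ω i t * Y ω j t ∂P

open Matrix

section Algebra

variable {m k : Type*} [Fintype m] [DecidableEq m] [Fintype k]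

lemma posDef_smul_one_add_transpose_mul_self {c : ℝ} (hc : 0 < c) (H : Matrix k m ℝ) :
    (c • (1 : Matrix m m ℝ) + Hᵀ * H).PosDef := by
  refine (PosDef.one.smul hc).add_posSemidef ?_
  simpa using posSemidef_conjTranspose_mul_self H

variable [DecidableEq k]

lemma transpose_mul_inv_smul_one_add_mul_transpose {c : ℝ} (hc : 0 < c) (H : Matrix k m ℝ) :
    Hᵀ * (c • (1 : Matrix k k ℝ) + H * Hᵀ)⁻¹ = (c • (1 : Matrix m m ℝ) + Hᵀ * H)⁻¹ * Hᵀ := by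
  set S := c • (1 : Matrix m m ℝ) + Hᵀ * H
  set T := c • (1 : Matrix k k ℝ) + H * Hᵀ
  have hS : IsUnit S.det := (posDef_smul_one_add_transpose_mul_self hc H).det_pos.ne'.isUnit
  have hT : IsUnit T.det := by
    simpa using (posDef_smul_one_add_transpose_mul_self hc Hᵀ).det_pos.ne'.isUnit
  have intertwine : S * Hᵀ = Hᵀ * T := by
    simp only [S, T, Matrix.add_mul, Matrix.mul_add, smul_mul, Matrix.mul_smul, Matrix.one_mul,
      Matrix.mul_one, Matrix.mul_assoc]
  calc Hᵀ * T⁻¹ = S⁻¹ * (S * Hᵀ) * T⁻¹ := by rw [nonsing_inv_mul_cancel_left _ _ hS]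
    _ = S⁻¹ * Hᵀ := by rw [intertwine, ← Matrix.mul_assoc, mul_nonsing_inv_cancel_right _ _ hT]

lemma smul_mul_transpose_add_mul_transpose_eq_of_filter {σ : ℝ} (hσ : 0 < σ) (H : Matrix k m ℝ)
    (A : Matrix m m ℝ) {B : Matrix m k ℝ}
    (hB : B = A * Hᵀ * (σ⁻¹ • (1 : Matrix k k ℝ) + H * Hᵀ)⁻¹) :
    σ • ((B * H - A) * (B * H - A)ᵀ) + B * Bᵀ = σ • (A * (1 + σ • (Hᵀ * H))⁻¹ * Aᵀ) := by
  set S := σ⁻¹ • (1 : Matrix m m ℝ) + Hᵀ * H with hS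
  have hSdet : IsUnit S.det :=
    (posDef_smul_one_add_transpose_mul_self (inv_pos.2 hσ) H).det_pos.ne'.isUnit
  have hSinv_symm : (S⁻¹)ᵀ = S⁻¹ := by
    rw [transpose_nonsing_inv, hS]
    simp [transpose_add, transpose_mul]
  have hB' : B = A * S⁻¹ * Hᵀ := by
    rw [hB, Matrix.mul_assoc, transpose_mul_inv_smul_one_add_mul_transpose (inv_pos.2 hσ),
      Matrix.mul_assoc]
  have hC : B * H - A = -σ⁻¹ • (A * S⁻¹) := by
    have hHH : Hᵀ * H = S - σ⁻¹ • 1 := by rw [hS]; abel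
    rw [hB', Matrix.mul_assoc, Matrix.mul_assoc, hHH, Matrix.mul_sub, nonsing_inv_mul _ hSdet]
    simp only [Matrix.mul_sub, Matrix.mul_smul, Matrix.mul_one]
    module
  have hσS : 1 + σ • (Hᵀ * H) = σ • S := by
    rw [hS, smul_add, smul_smul, mul_inv_cancel₀ hσ.ne', one_smul]
  have hQ : (1 + σ • (Hᵀ * H))⁻¹ = σ⁻¹ • S⁻¹ := by
    refine inv_eq_right_inv ?_
    rw [hσS, smul_mul_smul_comm, mul_inv_cancel₀ hσ.ne', one_smul, mul_nonsing_inv _ hSdet]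
  calc σ • ((B * H - A) * (B * H - A)ᵀ) + B * Bᵀ
      = A * S⁻¹ * (σ⁻¹ • 1 + Hᵀ * H) * S⁻¹ * Aᵀ := by
        rw [hC, hB']
        simp only [transpose_smul, transpose_mul, hSinv_symm, transpose_transpose,
          Matrix.smul_mul, Matrix.mul_smul, Matrix.mul_add, Matrix.add_mul, Matrix.mul_one,
          Matrix.mul_assoc, smul_smul]
        rw [show σ * (-σ⁻¹ * -σ⁻¹) = σ⁻¹ by field_simp]
    _ = σ • (A * (1 + σ • (Hᵀ * H))⁻¹ * Aᵀ) := by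
        rw [← hS, hQ, nonsing_inv_mul_cancel_right _ _ hSdet, Matrix.mul_smul, Matrix.smul_mul,
          smul_smul, mul_inv_cancel₀ hσ.ne', one_smul]

end Algebra

section Integral

variable {Ω : Type*} [MeasurableSpace Ω] {P : Measure Ω} {l m m' l' : Type*}

lemma integrable_add_apply {U V : Ω → Matrix m m' ℝ} (hU : ∀ a b, Integrable (fun ω => U ω a b) P)
    (hV : ∀ a b, Integrable (fun ω => V ω a b) P) (i : m) (j : m') :
    Integrable (fun ω => (U ω + V ω) i j) P :=
  (hU i j).add (hV i j)

lemma integral_add_apply {U V : Ω → Matrix m m' ℝ} (hU : ∀ a b, Integrable (fun ω => U ω a b) P)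
    (hV : ∀ a b, Integrable (fun ω => V ω a b) P) (i : m) (j : m') :
    ∫ ω, (U ω + V ω) i j ∂P = ∫ ω, U ω i j ∂P + ∫ ω, V ω i j ∂P :=
  integral_add (hU i j) (hV i j)

variable [Fintype m] [Fintype m']

lemma integrable_mul_mul_apply {W : Ω → Matrix m m' ℝ}
    (hW : ∀ a b, Integrable (fun ω => W ω a b) P) (C : Matrix l m ℝ) (D : Matrix m' l' ℝ)
    (i : l) (j : l') : Integrable (fun ω => (C * W ω * D) i j) P := by
  simp only [mul_apply, Finset.sum_mul]
  exact integrable_finsetSum _ fun b _ => integrable_finsetSum _ fun a _ =>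
    ((hW a b).const_mul _).mul_const _

lemma integral_mul_mul_apply {W : Ω → Matrix m m' ℝ}
    (hW : ∀ a b, Integrable (fun ω => W ω a b) P) (C : Matrix l m ℝ) (D : Matrix m' l' ℝ)
    (i : l) (j : l') :
    ∫ ω, (C * W ω * D) i j ∂P = (C * of (fun a b => ∫ ω, W ω a b ∂P) * D) i j := by
  simp only [mul_apply, Finset.sum_mul, of_apply]
  rw [integral_finsetSum _ fun b _ => integrable_finsetSum _ fun a _ =>
    ((hW a b).const_mul _).mul_const _]
  refine Finset.sum_congr rfl fun b _ => ?_
  rw [integral_finsetSum _ fun a _ => ((hW a b).const_mul _).mul_const _]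
  exact Finset.sum_congr rfl fun a _ => by rw [integral_mul_const, integral_const_mul]

end Integral

section GenCrossCov

variable {Ω : Type*} [MeasurableSpace Ω] {P : Measure Ω} {M N n : ℕ}

lemma genCrossCov_apply (X : Ω → Matrix (Fin M) (Fin n) ℝ) (Y : Ω → Matrix (Fin N) (Fin n) ℝ)
    (i : Fin M) (j : Fin N) :
    genCrossCov P X Y i j = (n : ℝ)⁻¹ * ∫ ω, (X ω * (Y ω)ᵀ) i j ∂P :=
  rfl

lemma genCrossCov_eq_smul (X : Ω → Matrix (Fin M) (Fin n) ℝ) (Y : Ω → Matrix (Fin N) (Fin n) ℝ) :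
    genCrossCov P X Y = (n : ℝ)⁻¹ • of fun i j => ∫ ω, (X ω * (Y ω)ᵀ) i j ∂P :=
  rfl

lemma transpose_genCrossCov (X : Ω → Matrix (Fin M) (Fin n) ℝ)
    (Y : Ω → Matrix (Fin N) (Fin n) ℝ) : (genCrossCov P X Y)ᵀ = genCrossCov P Y X := by
  ext i j
  simp only [genCrossCov, transpose_apply, of_apply, mul_comm (Y _ i _)]

lemma genCrossCov_mul_add_mul_self {M' : ℕ} {X : Ω → Matrix (Fin M) (Fin n) ℝ}
    {Z : Ω → Matrix (Fin N) (Fin n) ℝ}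
    (hXX : ∀ i j, Integrable (fun ω => (X ω * (X ω)ᵀ) i j) P)
    (hXZ : ∀ i j, Integrable (fun ω => (X ω * (Z ω)ᵀ) i j) P)
    (hZZ : ∀ i j, Integrable (fun ω => (Z ω * (Z ω)ᵀ) i j) P)
    (C : Matrix (Fin M') (Fin M) ℝ) (D : Matrix (Fin M') (Fin N) ℝ) :
    genCrossCov P (fun ω => C * X ω + D * Z ω) (fun ω => C * X ω + D * Z ω)
      = C * genCrossCov P X X * Cᵀ + C * genCrossCov P X Z * Dᵀ
        + D * (genCrossCov P X Z)ᵀ * Cᵀ + D * genCrossCov P Z Z * Dᵀ := by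
  have hZX : ∀ i j, Integrable (fun ω => (Z ω * (X ω)ᵀ) i j) P := fun i j =>
    (hXZ j i).congr (ae_of_all _ fun ω => by
      simp only [mul_apply, transpose_apply, mul_comm])
  have expand : ∀ ω, (C * X ω + D * Z ω) * (C * X ω + D * Z ω)ᵀ
      = C * (X ω * (X ω)ᵀ) * Cᵀ + C * (X ω * (Z ω)ᵀ) * Dᵀ
        + D * (Z ω * (X ω)ᵀ) * Cᵀ + D * (Z ω * (Z ω)ᵀ) * Dᵀ := fun ω => by
    simp only [transpose_add, transpose_mul, Matrix.add_mul, Matrix.mul_add, Matrix.mul_assoc]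
    abel
  have hXXt := integrable_mul_mul_apply hXX C Cᵀ
  have hXZt := integrable_mul_mul_apply hXZ C Dᵀ
  have hZXt := integrable_mul_mul_apply hZX D Cᵀ
  have hZZt := integrable_mul_mul_apply hZZ D Dᵀ
  ext i j
  simp only [genCrossCov_apply, expand]
  rw [integral_add_apply (integrable_add_apply (integrable_add_apply hXXt hXZt) hZXt) hZZt,
    integral_add_apply (integrable_add_apply hXXt hXZt) hZXt, integral_add_apply hXXt hXZt,
    integral_mul_mul_apply hXX, integral_mul_mul_apply hXZ, integral_mul_mul_apply hZX,
    integral_mul_mul_apply hZZ, transpose_genCrossCov, genCrossCov_eq_smul X X,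
    genCrossCov_eq_smul X Z, genCrossCov_eq_smul Z X, genCrossCov_eq_smul Z Z]
  simp only [Matrix.add_apply, Matrix.smul_apply, Matrix.mul_smul, Matrix.smul_mul, smul_eq_mul]
  ring

end GenCrossCov

theorem gencov_effective_noise_general
    {Ω : Type*} [MeasurableSpace Ω] (P : Measure Ω)
    {M N n : ℕ} (SNR : ℝ) (hSNR : 0 < SNR)
    (H : Matrix (Fin N) (Fin M) ℝ)
    (X : Ω → Matrix (Fin M) (Fin n) ℝ) (Z : Ω → Matrix (Fin N) (Fin n) ℝ)
    -- integrability of all relevant products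
    (hXX : ∀ i j, Integrable (fun ω => ∑ t, X ω i t * X ω j t) P)
    (hXZ : ∀ i j, Integrable (fun ω => ∑ t, X ω i t * Z ω j t) P)
    (hZZ : ∀ i j, Integrable (fun ω => ∑ t, Z ω i t * Z ω j t) P)
    -- second-order statistics
    (hKXX : genCrossCov P X X = SNR • (1 : Matrix (Fin M) (Fin M) ℝ))
    (hKZZ : genCrossCov P Z Z = (1 : Matrix (Fin N) (Fin N) ℝ))
    (hKXZ : genCrossCov P X Z = 0)
    (A : Matrix (Fin M) (Fin M) ℝ)
    (B : Matrix (Fin M) (Fin N) ℝ)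
    (hB : B = A * H.transpose * (SNR⁻¹ • (1 : Matrix (Fin N) (Fin N) ℝ) + H * H.transpose)⁻¹)
    (Zeff : Ω → Matrix (Fin M) (Fin n) ℝ)
    (hZeff : ∀ ω, Zeff ω = (B * H - A) * X ω + B * Z ω) :
    genCrossCov P Zeff Zeff
      = SNR • (A * ((1 : Matrix (Fin M) (Fin M) ℝ) + SNR • (H.transpose * H))⁻¹ * A.transpose) := by
  rw [funext hZeff, genCrossCov_mul_add_mul_self hXX hXZ hZZ, hKXX, hKZZ, hKXZ]
  simp only [Matrix.mul_zero, Matrix.zero_mul, transpose_zero, add_zero, Matrix.mul_one,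
    Matrix.mul_smul, Matrix.smul_mul]
  exact smul_mul_transpose_add_mul_transpose_eq_of_filter hSNR H A hB

theorem gencov_effective_noise
    {Ω : Type*} [MeasurableSpace Ω] (P : Measure Ω) [IsProbabilityMeasure P]
    {M N n : ℕ} (SNR : ℝ) (hSNR : 0 < SNR)
    (H : Matrix (Fin N) (Fin M) ℝ)
    (X : Ω → Matrix (Fin M) (Fin n) ℝ) (Z : Ω → Matrix (Fin N) (Fin n) ℝ)
    -- zero mean
    (hX0 : ∀ i t, ∫ ω, X ω i t ∂P = 0) (hZ0 : ∀ j t, ∫ ω, Z ω j t ∂P = 0)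
    -- integrability of all relevant products
    (hXX : ∀ i j, Integrable (fun ω => ∑ t, X ω i t * X ω j t) P)
    (hXZ : ∀ i j, Integrable (fun ω => ∑ t, X ω i t * Z ω j t) P)
    (hZZ : ∀ i j, Integrable (fun ω => ∑ t, Z ω i t * Z ω j t) P)
    -- second-order statistics
    (hKXX : genCrossCov P X X = SNR • (1 : Matrix (Fin M) (Fin M) ℝ))
    (hKZZ : genCrossCov P Z Z = (1 : Matrix (Fin N) (Fin N) ℝ))
    (hKXZ : genCrossCov P X Z = 0)
    (A : Matrix (Fin M) (Fin M) ℝ)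
    (B : Matrix (Fin M) (Fin N) ℝ)
    (hB : B = A * H.transpose * (SNR⁻¹ • (1 : Matrix (Fin N) (Fin N) ℝ) + H * H.transpose)⁻¹)
    (Zeff : Ω → Matrix (Fin M) (Fin n) ℝ)
    (hZeff : ∀ ω, Zeff ω = (B * H - A) * X ω + B * Z ω) :
    genCrossCov P Zeff Zeff
      = SNR • (A * ((1 : Matrix (Fin M) (Fin M) ℝ) + SNR • (H.transpose * H))⁻¹ * A.transpose) :=
  gencov_effective_noise_general P SNR hSNR H X Z hXX hXZ hZZ hKXX hKZZ hKXZ A B hB Zeff hZeff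
end

section
/- Let SNR > 0, H ∈ ℝ^{N×M}, and let A ∈ ℤ^{M×M} be a full-rank integer matrix. Let A·(I_M + SNR·Hᵀ·H)⁻¹·Aᵀ = L·Lᵀ be the Cholesky decomposition, with L lower triangular having strictly positive diagonal entries ℓ_11,…,ℓ_MM. Then ∑_{m=1}^{M} −(1/2)·log₂(ℓ_mm²) = (1/2)·log₂ det(I_M + SNR·Hᵀ·H) − log₂|det(A)|. In particular, if A is unimodular (|det A| = 1), the sum of the per-stream successive integer-forcing rates equals the white-input mutual information C_WI. -/
/-!
Taking determinants in the Cholesky identity gives `(∏ ℓ_mm)² = det A² / det(I + SNR·HᵀH)`,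
and the claim is the base-2 logarithm of this identity. Since the left side is positive,
the identity itself shows that `det A` and `det(I + SNR·HᵀH)` are nonzero.
-/

open Matrix

namespace Matrix

variable {n : Type*} [Fintype n]

theorem det_mul_nonsing_inv_mul_transpose {K : Type*} [Field K] [DecidableEq n]
    (B S : Matrix n n K) :
    (B * S⁻¹ * Bᵀ).det = B.det ^ 2 / S.det := by
  rw [det_mul, det_mul, det_transpose, det_nonsing_inv, Ring.inverse_eq_inv']
  ring

theorem det_mul_transpose_of_isLowerTriangular {R : Type*} [CommRing R] [LinearOrder n]
    (L : Matrix n n R) (hL : L.IsLowerTriangular) :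
    (L * Lᵀ).det = (∏ i, L i i) ^ 2 := by
  rw [det_mul, det_transpose, det_of_isLowerTriangular L hL, sq]

end Matrix

theorem successive_if_sum_rate_general {M N : ℕ}
    (SNR : ℝ)
    (H : Matrix (Fin N) (Fin M) ℝ)
    (A : Matrix (Fin M) (Fin M) ℤ)
    (L : Matrix (Fin M) (Fin M) ℝ)
    (hLtri : ∀ i j : Fin M, i < j → L i j = 0)
    (hLdiag : ∀ i : Fin M, 0 < L i i)
    (hchol : (A.map (Int.cast : ℤ → ℝ))
        * ((1 : Matrix (Fin M) (Fin M) ℝ) + SNR • (H.transpose * H))⁻¹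
        * (A.map (Int.cast : ℤ → ℝ)).transpose = L * L.transpose) :
    (∑ m : Fin M, -(1/2 : ℝ) * Real.logb 2 ((L m m)^2)
      = (1/2 : ℝ) * Real.logb 2
          ((1 : Matrix (Fin M) (Fin M) ℝ) + SNR • (H.transpose * H)).det
        - Real.logb 2 |(A.det : ℝ)|) ∧
    (|(A.det : ℝ)| = 1 →
      ∑ m : Fin M, -(1/2 : ℝ) * Real.logb 2 ((L m m)^2)
        = (1/2 : ℝ) * Real.logb 2
            ((1 : Matrix (Fin M) (Fin M) ℝ) + SNR • (H.transpose * H)).det) := by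
  set S : Matrix (Fin M) (Fin M) ℝ := 1 + SNR • (Hᵀ * H)
  have hprod : (∏ m, L m m) ^ 2 = (A.det : ℝ) ^ 2 / S.det := by
    rw [← det_mul_transpose_of_isLowerTriangular L fun i j h => hLtri i j h, ← hchol,
      det_mul_nonsing_inv_mul_transpose, Int.cast_det]
  have hprod_pos : 0 < (∏ m, L m m) ^ 2 :=
    pow_pos (Finset.prod_pos fun i _ => hLdiag i) 2
  obtain ⟨hdetA, hdetS⟩ := div_ne_zero_iff.mp (hprod ▸ hprod_pos.ne')
  have hsum : ∑ m, -(1/2 : ℝ) * Real.logb 2 ((L m m) ^ 2)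
      = -(1/2 : ℝ) * Real.logb 2 ((∏ m, L m m) ^ 2) := by
    rw [← Finset.mul_sum, ← Finset.prod_pow,
      Real.logb_prod _ _ fun i _ => pow_ne_zero 2 (hLdiag i).ne']
  have main : ∑ m, -(1/2 : ℝ) * Real.logb 2 ((L m m) ^ 2)
      = (1/2 : ℝ) * Real.logb 2 S.det - Real.logb 2 |(A.det : ℝ)| := by
    rw [hsum, hprod, Real.logb_div hdetA hdetS, ← sq_abs, Real.logb_pow]
    ring
  exact ⟨main, fun h => by rw [main, h, Real.logb_one, sub_zero]⟩

theorem successive_if_sum_rate {M N : ℕ}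
    (SNR : ℝ) (hSNR : 0 < SNR)
    (H : Matrix (Fin N) (Fin M) ℝ)
    (A : Matrix (Fin M) (Fin M) ℤ) (hA : A.det ≠ 0)
    (L : Matrix (Fin M) (Fin M) ℝ)
    (hLtri : ∀ i j : Fin M, i < j → L i j = 0)
    (hLdiag : ∀ i : Fin M, 0 < L i i)
    (hchol : (A.map (Int.cast : ℤ → ℝ))
        * ((1 : Matrix (Fin M) (Fin M) ℝ) + SNR • (H.transpose * H))⁻¹
        * (A.map (Int.cast : ℤ → ℝ)).transpose = L * L.transpose) :
    (∑ m : Fin M, -(1/2 : ℝ) * Real.logb 2 ((L m m)^2)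
      = (1/2 : ℝ) * Real.logb 2
          ((1 : Matrix (Fin M) (Fin M) ℝ) + SNR • (H.transpose * H)).det
        - Real.logb 2 |(A.det : ℝ)|) ∧
    (|(A.det : ℝ)| = 1 →
      ∑ m : Fin M, -(1/2 : ℝ) * Real.logb 2 ((L m m)^2)
        = (1/2 : ℝ) * Real.logb 2
            ((1 : Matrix (Fin M) (Fin M) ℝ) + SNR • (H.transpose * H)).det) :=
  successive_if_sum_rate_general SNR H A L hLtri hLdiag hchol
end

section
/- Let SNR > 0, H ∈ ℝ^{N×M}, let (I_M + SNR·Hᵀ·H)⁻¹ = G·Gᵀ be the Cholesky decomposition (G lower triangular with positive diagonal), and let Λ(Gᵀ) = {Gᵀ·z : z ∈ ℤ^M}. Suppose A ∈ ℤ^{M×M} is unimodular and the columns f_1,…,f_M of F = Gᵀ·Aᵀ form a Korkin–Zolotarev reduced basis of Λ(Gᵀ), i.e. for every i = 1,…,M: (i) P_i(f_i) is a shortest nonzero vector in P_i(Λ(Gᵀ)) — that is, for every z ∈ ℤ^M with P_i(Gᵀz) ≠ 0 one has ‖P_i(f_i)‖ ≤ ‖P_i(Gᵀz)‖ — and (ii)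 the Gram–Schmidt coefficients satisfy |f_jᵀ·f_i*| / ‖f_i*‖² ≤ 1/2 for all j > i, where P_i denotes orthogonal projection onto the orthogonal complement of span(f_1,…,f_{i−1}) and f_i* = P_i(f_i). Then A is an optimal integer matrix for successive integer-forcing: for every full-rank integer matrix Ã ∈ ℤ^{M×M}, max_{k=1,…,M} ℓ_kk(A)² ≤ max_{k=1,…,M} ℓ_kk(Ã)², where for a full-rank integer matrix B, ℓ_kk(B) denote the diagonal entries of the lower-triangular Cholesky factor of B·(I_M + SNR·Hᵀ·H)⁻¹·Bᵀ. -/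
/-!
Let `F = A G` and `F̃ = Ã G` (integer rows times `G`), so that `F Fᵀ = L Lᵀ` and
`F̃ F̃ᵀ = L̃ L̃ᵀ`; the vectors `f_i` are the rows of `F`. Then `F = L Q` with `Q` orthogonal, and as
`L` and `L⁻¹` are lower triangular, the rows of `F` and of `Q` span the same initial segments.
Hence `ℓ_kk = ‖P_k f_k‖` is the length of the `k`-th Gram–Schmidt vector, and likewise for `F̃`.
The rows of `F̃` span the whole space, so some row lies outside `span(f_1, …, f_{k-1})`; for the
least such index `j` the earlier rows of `F̃` lie inside it, whence, using KZ condition (i),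
`ℓ_kk(A) = ‖P_k f_k‖ ≤ ‖P_k f̃_j‖ ≤ ‖P̃_j f̃_j‖ = ℓ_jj(Ã)`.
-/

open RealInnerProductSpace

noncomputable def toE {M : ℕ} (v : Fin M → ℝ) : EuclideanSpace ℝ (Fin M) :=
  (EuclideanSpace.equiv (Fin M) ℝ).symm v

/-- `projPerp f i x` is the orthogonal projection of `x` onto the orthogonal complement of
`span(f_1, …, f_{i-1})`. -/
noncomputable def projPerp {M : ℕ} (f : Fin M → EuclideanSpace ℝ (Fin M)) (i : Fin M)
    (x : EuclideanSpace ℝ (Fin M)) : EuclideanSpace ℝ (Fin M) :=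
  (Submodule.orthogonalProjectionOnto (Submodule.span ℝ (f '' {j | j < i}))ᗮ x : EuclideanSpace ℝ (Fin M))

open Submodule Matrix

theorem Submodule.norm_starProjection_orthogonal_le_of_le {𝕜 E : Type*} [RCLike 𝕜]
    [NormedAddCommGroup E] [InnerProductSpace 𝕜 E] {W V : Submodule 𝕜 E}
    [W.HasOrthogonalProjection] [V.HasOrthogonalProjection] (h : W ≤ V) (x : E) :
    ‖Vᗮ.starProjection x‖ ≤ ‖Wᗮ.starProjection x‖ := by
  rw [← starProjection_comp_starProjection_of_le (orthogonal_le h)]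
  exact norm_starProjection_apply_le _ _

section TriangularChange

variable {ι E : Type*} [LinearOrder ι] [NormedAddCommGroup E] [InnerProductSpace ℝ E]

theorem sum_smul_mem_span_image_Iio {q : ι → E} {k : ι} (s : Finset ι) (c : ι → ℝ)
    (hc : ∀ t ∈ s, k ≤ t → c t = 0) : ∑ t ∈ s, c t • q t ∈ span ℝ (q '' Set.Iio k) := by
  refine sum_mem fun t ht => ?_
  rcases lt_or_ge t k with htk | hkt
  · exact smul_mem _ _ (subset_span ⟨t, htk, rfl⟩)
  · rw [hc t ht hkt, zero_smul]
    exact zero_mem _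

variable [Fintype ι] {f q : ι → E} {L L' : Matrix ι ι ℝ}

theorem span_image_Iio_le_of_isLowerTriangular (hL : L.IsLowerTriangular)
    (hf : ∀ i, f i = ∑ t, L i t • q t) (k : ι) :
    span ℝ (f '' Set.Iio k) ≤ span ℝ (q '' Set.Iio k) := by
  rw [span_le]
  rintro _ ⟨j, hjk, rfl⟩
  rw [hf j]
  exact sum_smul_mem_span_image_Iio _ _ fun t _ hkt =>
    hL (OrderDual.toDual_lt_toDual.mpr (hjk.trans_le hkt))

theorem sub_diag_smul_mem_span_image_Iio (hL : L.IsLowerTriangular)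
    (hf : ∀ i, f i = ∑ t, L i t • q t) (k : ι) :
    f k - L k k • q k ∈ span ℝ (q '' Set.Iio k) := by
  rw [hf k, ← Finset.sum_erase_eq_sub (Finset.mem_univ k)]
  exact sum_smul_mem_span_image_Iio _ _ fun t ht hkt =>
    hL (OrderDual.toDual_lt_toDual.mpr (hkt.lt_of_ne (Finset.ne_of_mem_erase ht).symm))

theorem starProjection_orthogonal_span_image_Iio_eq [FiniteDimensional ℝ E]
    (hq : Orthonormal ℝ q) (hL : L.IsLowerTriangular) (hf : ∀ i, f i = ∑ t, L i t • q t)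
    (hL' : L'.IsLowerTriangular) (hq' : ∀ i, q i = ∑ t, L' i t • f t) (k : ι) :
    (span ℝ (f '' Set.Iio k))ᗮ.starProjection (f k) = L k k • q k := by
  have hspan : span ℝ (f '' Set.Iio k) = span ℝ (q '' Set.Iio k) :=
    (span_image_Iio_le_of_isLowerTriangular hL hf k).antisymm
      (span_image_Iio_le_of_isLowerTriangular hL' hq' k)
  have hqk : q k ∈ (span ℝ (f '' Set.Iio k))ᗮ := by
    rw [hspan]
    refine (isOrtho_span.mpr ?_).ge (mem_span_singleton_self (q k))
    rintro _ ⟨j, hjk, rfl⟩ _ rfl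
    exact hq.inner_eq_zero hjk.ne
  have hrest : f k - L k k • q k ∈ (span ℝ (f '' Set.Iio k))ᗮᗮ := by
    rw [orthogonal_orthogonal, hspan]
    exact sub_diag_smul_mem_span_image_Iio hL hf k
  rw [← sub_add_cancel (f k) (L k k • q k), map_add,
    (starProjection_apply_eq_zero_iff _).mpr hrest,
    starProjection_eq_self_iff.mpr (smul_mem _ _ hqk), zero_add]

end TriangularChange

section CholeskyRows

variable {ι : Type*} [Fintype ι]

theorem toLp_mul_row (L Q : Matrix ι ι ℝ) (i : ι) :
    WithLp.toLp 2 ((L * Q) i) = ∑ t, L i t • WithLp.toLp 2 (Q t) := by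
  rw [mul_apply_eq_vecMul, vecMul_eq_sum]
  simp

variable [DecidableEq ι]

theorem Matrix.IsLowerTriangular.isUnit_det [LinearOrder ι] {L : Matrix ι ι ℝ}
    (hL : L.IsLowerTriangular) (hdiag : ∀ i, 0 < L i i) : IsUnit L.det := by
  rw [det_of_isLowerTriangular L hL]
  exact (Finset.prod_pos fun i _ => hdiag i).ne'.isUnit

theorem Matrix.exists_orthogonal_eq_mul_of_mul_transpose_eq {F L : Matrix ι ι ℝ}
    (hL : IsUnit L.det) (h : F * Fᵀ = L * Lᵀ) : ∃ Q : Matrix ι ι ℝ, Q * Qᵀ = 1 ∧ F = L * Q := by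
  have := L.invertibleOfIsUnitDet hL
  refine ⟨L⁻¹ * F, ?_, (mul_inv_cancel_left_of_invertible L F).symm⟩
  calc L⁻¹ * F * (L⁻¹ * F)ᵀ = L⁻¹ * (F * Fᵀ) * (Lᵀ)⁻¹ := by
        rw [transpose_mul, transpose_nonsing_inv]
        simp only [Matrix.mul_assoc]
    _ = 1 := by
        rw [h, Matrix.mul_assoc, Matrix.mul_assoc, mul_inv_of_invertible, Matrix.mul_one,
          inv_mul_of_invertible]

theorem Matrix.det_ne_zero_of_mul_transpose_eq {F L : Matrix ι ι ℝ} (hL : L.det ≠ 0)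
    (h : F * Fᵀ = L * Lᵀ) : F.det ≠ 0 := by
  have hdet := congrArg det h
  rw [det_mul, det_mul, det_transpose, det_transpose] at hdet
  exact fun hF => hL (mul_self_eq_zero.mp (by rw [← hdet, hF, zero_mul]))

theorem orthonormal_toLp_rows {Q : Matrix ι ι ℝ} (hQ : Q * Qᵀ = 1) :
    Orthonormal ℝ fun i => WithLp.toLp 2 (Q i) := by
  rw [orthonormal_iff_ite]
  intro i j
  rw [EuclideanSpace.inner_toLp_toLp, star_trivial, ← one_apply, ← hQ, mul_apply', eq_comm]
  exact dotProduct_comm _ _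

theorem span_range_toLp_rows_eq_top {F : Matrix ι ι ℝ} (hF : F.det ≠ 0) :
    span ℝ (Set.range fun i => WithLp.toLp 2 (F i)) = ⊤ :=
  ((linearIndependent_rows_of_det_ne_zero hF).map'
      (WithLp.linearEquiv 2 ℝ (ι → ℝ)).symm.toLinearMap
      (LinearEquiv.ker _)).span_eq_top_of_card_eq_finrank'
    finrank_euclideanSpace.symm

theorem norm_starProjection_orthogonal_span_rows_eq [LinearOrder ι] {F L : Matrix ι ι ℝ}
    (hL : L.IsLowerTriangular) (hdiag : ∀ i, 0 < L i i) (h : F * Fᵀ = L * Lᵀ) (k : ι) :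
    ‖(span ℝ ((fun i => WithLp.toLp 2 (F i)) '' Set.Iio k))ᗮ.starProjection
      (WithLp.toLp 2 (F k))‖ = L k k := by
  have hdet := hL.isUnit_det hdiag
  have := L.invertibleOfIsUnitDet hdet
  obtain ⟨Q, hQ, rfl⟩ := exists_orthogonal_eq_mul_of_mul_transpose_eq hdet h
  have hq := orthonormal_toLp_rows hQ
  have hQF : ∀ i, WithLp.toLp 2 (Q i) = ∑ t, L⁻¹ i t • WithLp.toLp 2 ((L * Q) t) := fun i => by
    rw [← toLp_mul_row, inv_mul_cancel_left_of_invertible]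
  rw [starProjection_orthogonal_span_image_Iio_eq hq hL (toLp_mul_row L Q)
    (blockTriangular_inv_of_blockTriangular hL) hQF, norm_smul, hq.1 k, mul_one,
    Real.norm_of_nonneg (hdiag k).le]

end CholeskyRows

theorem exists_starProjection_ne_zero_and_norm_le {ι 𝕜 E : Type*} [LinearOrder ι]
    [WellFoundedLT ι] [RCLike 𝕜] [NormedAddCommGroup E] [InnerProductSpace 𝕜 E]
    [FiniteDimensional 𝕜 E] {b : ι → E} (hb : span 𝕜 (Set.range b) = ⊤) {V : Submodule 𝕜 E}
    (hV : V ≠ ⊤) :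
    ∃ j, Vᗮ.starProjection (b j) ≠ 0 ∧
      ‖Vᗮ.starProjection (b j)‖ ≤ ‖(span 𝕜 (b '' Set.Iio j))ᗮ.starProjection (b j)‖ := by
  have hex : ∃ j, b j ∉ V := by
    by_contra! h
    exact hV (eq_top_iff.2 (hb ▸ span_le.2 (Set.range_subset_iff.2 h)))
  obtain ⟨j, hjV, hmin⟩ := wellFounded_lt.has_min {j | b j ∉ V} hex
  refine ⟨j, ?_, norm_starProjection_orthogonal_le_of_le (span_le.2 ?_) _⟩
  · rwa [Ne, starProjection_apply_eq_zero_iff, orthogonal_orthogonal]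
  · rintro _ ⟨t, ht, rfl⟩
    by_contra h
    exact hmin t h ht

theorem toE_transpose_mulVec_intCast_row {M : ℕ} (B : Matrix (Fin M) (Fin M) ℤ)
    (G : Matrix (Fin M) (Fin M) ℝ) (i : Fin M) :
    toE (Gᵀ *ᵥ fun t => (B i t : ℝ)) = WithLp.toLp 2 ((B.map (Int.cast : ℤ → ℝ) * G) i) := by
  rw [mulVec_transpose, mul_apply_eq_vecMul]
  rfl

theorem Matrix.mul_mul_transpose_mul_eq {m n p α : Type*} [Fintype n] [Fintype p]
    [CommSemiring α] (B : Matrix m n α) (G : Matrix n p α) :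
    B * G * (B * G)ᵀ = B * (G * Gᵀ) * Bᵀ := by
  simp only [transpose_mul, Matrix.mul_assoc]

theorem kz_reduced_is_optimal_for_successive_if_general {M N : ℕ}
    (SNR : ℝ)
    (H : Matrix (Fin N) (Fin M) ℝ)
    (G : Matrix (Fin M) (Fin M) ℝ)
    (hGchol : ((1 : Matrix (Fin M) (Fin M) ℝ) + SNR • (H.transpose * H))⁻¹ = G * G.transpose)
    (A : Matrix (Fin M) (Fin M) ℤ)
    -- f_i are the columns of F = Gᵀ Aᵀ, i.e. f_i = Gᵀ a_i with a_iᵀ the i-th row of A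
    (f : Fin M → EuclideanSpace ℝ (Fin M))
    (hf : ∀ i, f i = toE ((G.transpose).mulVec (fun t => ((A i t : ℤ) : ℝ))))
    -- KZ condition (i): P_i(f_i) is a shortest nonzero vector of P_i(Λ(Gᵀ))
    (hKZ1 : ∀ (i : Fin M) (z : Fin M → ℤ),
      projPerp f i (toE ((G.transpose).mulVec (fun t => (z t : ℝ)))) ≠ 0 →
      ‖projPerp f i (f i)‖ ≤ ‖projPerp f i (toE ((G.transpose).mulVec (fun t => (z t : ℝ))))‖)
    -- L is the Cholesky factor associated with A
    (L : Matrix (Fin M) (Fin M) ℝ)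
    (hLtri : ∀ a b : Fin M, a < b → L a b = 0)
    (hLdiag : ∀ a : Fin M, 0 < L a a)
    (hLchol : (A.map (Int.cast : ℤ → ℝ))
        * ((1 : Matrix (Fin M) (Fin M) ℝ) + SNR • (H.transpose * H))⁻¹
        * (A.map (Int.cast : ℤ → ℝ)).transpose = L * L.transpose) :
    -- then A minimizes max_k ℓ_kk² over all full-rank integer matrices
    ∀ (Atil : Matrix (Fin M) (Fin M) ℤ), Atil.det ≠ 0 →
    ∀ (Ltil : Matrix (Fin M) (Fin M) ℝ),
      (∀ a b : Fin M, a < b → Ltil a b = 0) →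
      (∀ a : Fin M, 0 < Ltil a a) →
      (Atil.map (Int.cast : ℤ → ℝ))
          * ((1 : Matrix (Fin M) (Fin M) ℝ) + SNR • (H.transpose * H))⁻¹
          * (Atil.map (Int.cast : ℤ → ℝ)).transpose = Ltil * Ltil.transpose →
    ∀ k : Fin M,
      (L k k)^2 ≤ Finset.univ.sup' ⟨k, Finset.mem_univ k⟩ (fun j => (Ltil j j)^2) := by
  intro Atil _ Ltil hLtil_tri hLtil_diag hLtil_chol k
  rw [hGchol, ← mul_mul_transpose_mul_eq] at hLchol hLtil_chol
  have hL : L.IsLowerTriangular := fun a b h => hLtri a b h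
  have hLtil : Ltil.IsLowerTriangular := fun a b h => hLtil_tri a b h
  have hfA : f = fun i => WithLp.toLp 2 ((A.map (Int.cast : ℤ → ℝ) * G) i) :=
    funext fun i => (hf i).trans (toE_transpose_mulVec_intCast_row A G i)
  have hLk : ‖projPerp f k (f k)‖ = L k k := by
    rw [hfA]
    exact norm_starProjection_orthogonal_span_rows_eq hL hLdiag hLchol k
  have hV : span ℝ (f '' {j | j < k}) ≠ ⊤ := fun htop =>
    (hLdiag k).ne' (by simp [← hLk, projPerp, htop])
  obtain ⟨j, hj0, hjle⟩ := exists_starProjection_ne_zero_and_norm_le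
    (span_range_toLp_rows_eq_top (det_ne_zero_of_mul_transpose_eq
      (hLtil.isUnit_det hLtil_diag).ne_zero hLtil_chol)) hV
  have hKZ := hKZ1 k (Atil j)
  rw [toE_transpose_mulVec_intCast_row] at hKZ
  calc L k k ^ 2 = ‖projPerp f k (f k)‖ ^ 2 := by rw [hLk]
    _ ≤ ‖(span ℝ (f '' {j | j < k}))ᗮ.starProjection
          (WithLp.toLp 2 ((Atil.map (Int.cast : ℤ → ℝ) * G) j))‖ ^ 2 := by
        gcongr
        exact hKZ hj0
    _ ≤ Ltil j j ^ 2 := by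
        gcongr
        exact hjle.trans
          (norm_starProjection_orthogonal_span_rows_eq hLtil hLtil_diag hLtil_chol j).le
    _ ≤ _ := Finset.le_sup' (fun j => Ltil j j ^ 2) (Finset.mem_univ j)

theorem kz_reduced_is_optimal_for_successive_if {M N : ℕ}
    (SNR : ℝ) (hSNR : 0 < SNR)
    (H : Matrix (Fin N) (Fin M) ℝ)
    (G : Matrix (Fin M) (Fin M) ℝ)
    (hGtri : ∀ i j : Fin M, i < j → G i j = 0)
    (hGdiag : ∀ i : Fin M, 0 < G i i)
    (hGchol : ((1 : Matrix (Fin M) (Fin M) ℝ) + SNR • (H.transpose * H))⁻¹ = G * G.transpose)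
    -- A is unimodular
    (A : Matrix (Fin M) (Fin M) ℤ) (hA : A.det = 1 ∨ A.det = -1)
    -- f_i are the columns of F = Gᵀ Aᵀ, i.e. f_i = Gᵀ a_i with a_iᵀ the i-th row of A
    (f : Fin M → EuclideanSpace ℝ (Fin M))
    (hf : ∀ i, f i = toE ((G.transpose).mulVec (fun t => ((A i t : ℤ) : ℝ))))
    -- KZ condition (i): P_i(f_i) is a shortest nonzero vector of P_i(Λ(Gᵀ))
    (hKZ1 : ∀ (i : Fin M) (z : Fin M → ℤ),
      projPerp f i (toE ((G.transpose).mulVec (fun t => (z t : ℝ)))) ≠ 0 →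
      ‖projPerp f i (f i)‖ ≤ ‖projPerp f i (toE ((G.transpose).mulVec (fun t => (z t : ℝ))))‖)
    -- KZ condition (ii): the Gram–Schmidt coefficients are at most 1/2 in magnitude
    (hKZ2 : ∀ i j : Fin M, i < j →
      |⟪f j, projPerp f i (f i)⟫| / ‖projPerp f i (f i)‖^2 ≤ 1/2)
    -- L is the Cholesky factor associated with A
    (L : Matrix (Fin M) (Fin M) ℝ)
    (hLtri : ∀ a b : Fin M, a < b → L a b = 0)
    (hLdiag : ∀ a : Fin M, 0 < L a a)
    (hLchol : (A.map (Int.cast : ℤ → ℝ))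
        * ((1 : Matrix (Fin M) (Fin M) ℝ) + SNR • (H.transpose * H))⁻¹
        * (A.map (Int.cast : ℤ → ℝ)).transpose = L * L.transpose) :
    -- then A minimizes max_k ℓ_kk² over all full-rank integer matrices
    ∀ (Atil : Matrix (Fin M) (Fin M) ℤ), Atil.det ≠ 0 →
    ∀ (Ltil : Matrix (Fin M) (Fin M) ℝ),
      (∀ a b : Fin M, a < b → Ltil a b = 0) →
      (∀ a : Fin M, 0 < Ltil a a) →
      (Atil.map (Int.cast : ℤ → ℝ))
          * ((1 : Matrix (Fin M) (Fin M) ℝ) + SNR • (H.transpose * H))⁻¹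
          * (Atil.map (Int.cast : ℤ → ℝ)).transpose = Ltil * Ltil.transpose →
    ∀ k : Fin M,
      (L k k)^2 ≤ Finset.univ.sup' ⟨k, Finset.mem_univ k⟩ (fun j => (Ltil j j)^2) :=
  kz_reduced_is_optimal_for_successive_if_general SNR H G hGchol A f hf hKZ1 L hLtri hLdiag hLchol
end

section
/- Let G ∈ ℝ^{M×M} be invertible and let A ∈ ℤ^{M×M} be a full-rank integer matrix with rows a_1ᵀ,…,a_Mᵀ, and set f_i = Gᵀ·a_i. Fix i ∈ {1,…,M} and suppose that P_i(f_i) is a shortest nonzero vector in P_i(Λ(Gᵀ)), where Λ(Gᵀ) = {Gᵀz : z ∈ ℤ^M} and P_i denotes orthogonal projection onto the orthogonal complement of span(f_1,…,f_{i−1}); i.e. for every z ∈ ℤ^M with P_i(Gᵀz) ≠ 0, ‖P_i(f_i)‖ ≤ ‖P_i(Gᵀz)‖. Then a_i minimizes the i-th diagonal Cholesky entry given the previous rows: for every a ∈ ℤ^M such that a_1,…,a_{i−1},a are linearly independent, ‖P_i(Gᵀ·a_i)‖² ≤ ‖P_i(Gᵀ·a)‖², and consequently ℓ_ii² = ‖P_i(Gᵀ·a_i)‖²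 ≤ ‖P_i(Gᵀ·a)‖², where ℓ_ii is the i-th diagonal entry of the lower-triangular Cholesky factor of A·G·Gᵀ·Aᵀ. -/
/-!
The Gram matrix of the rows `f j` of `A * G` is `L * Lᵀ`, so `u := L⁻¹ f` is orthonormal and
`f j = ∑_{s ≤ j} L j s • u s`. As `L` and `L⁻¹` are lower triangular, `f` and `u` span the same
initial subspaces; hence `P_i (f i) = L i i • u i` and `‖P_i (f i)‖ = |L i i|`.
For the minimality, `P_i (Gᵀ a) = 0` would put `Gᵀ a` in the span of `Gᵀ a_j`, `j < i`, hence
(`Gᵀ` being injective) `a` in the span of the `a_j`, against linear independence; so the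
shortest-vector hypothesis applies to `Gᵀ a`.
-/

open Submodule Matrix Set

theorem Matrix.sum_smul_sum_smul_of_mul_eq_one {ι R M : Type*} [Fintype ι] [DecidableEq ι]
    [CommSemiring R] [AddCommMonoid M] [Module R M] {A B : Matrix ι ι R} (hAB : A * B = 1)
    (v : ι → M) (j : ι) : ∑ s, A j s • ∑ t, B s t • v t = v j := by
  simp only [Finset.smul_sum, smul_smul]
  rw [Finset.sum_comm]
  simp [← Finset.sum_smul, ← Matrix.mul_apply, hAB, Matrix.one_apply]

theorem Matrix.gram_sum_smul {ι E : Type*} [Fintype ι] [NormedAddCommGroup E]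
    [InnerProductSpace ℝ E] (B : Matrix ι ι ℝ) (v : ι → E) :
    gram ℝ (fun j => ∑ s, B j s • v s) = B * gram ℝ v * Bᵀ := by
  ext j k
  simp only [gram_apply, sum_inner, inner_sum, real_inner_smul_left, real_inner_smul_right,
    Matrix.mul_apply, transpose_apply, Finset.sum_mul]
  exact Finset.sum_congr rfl fun _ _ => Finset.sum_congr rfl fun _ _ => by ring

theorem Matrix.gram_toLp {ι n : Type*} [Fintype n] (F : Matrix ι n ℝ) :
    gram ℝ (fun j => WithLp.toLp 2 (F j)) = F * Fᵀ := by
  ext j k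
  simp [gram_apply, Matrix.mul_apply, PiLp.inner_apply, mul_comm]

theorem Orthonormal.mem_orthogonal_span_image {ι 𝕜 E : Type*} [RCLike 𝕜] [NormedAddCommGroup E]
    [InnerProductSpace 𝕜 E] {u : ι → E} (hu : Orthonormal 𝕜 u) {s : Set ι} {i : ι} (hi : i ∉ s) :
    u i ∈ (span 𝕜 (u '' s))ᗮ := by
  have : span 𝕜 {u i} ⟂ span 𝕜 (u '' s) := by
    rw [isOrtho_span]
    rintro _ rfl _ ⟨j, hj, rfl⟩
    exact hu.inner_eq_zero (ne_of_mem_of_not_mem hj hi).symm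
  exact isOrtho_iff_le.1 this (mem_span_singleton_self _)

theorem notMem_span_image_Iio_of_linearIndependent {R V : Type*} [Ring R] [Nontrivial R]
    [AddCommGroup V] [Module R V] {n : ℕ} (v : Fin n → V) (i : Fin n) (w : V)
    (h : LinearIndependent R (fun j : Fin (i.val + 1) =>
      if h : (j : ℕ) < i.val then v ⟨j, h.trans i.isLt⟩ else w)) :
    w ∉ span R (v '' Iio i) := by
  have hw := h.notMem_span_image (s := {j | (j : ℕ) < i.val}) (x := Fin.last i.val) (by simp)
  contrapose! hw
  refine span_mono ?_ (by simpa using hw)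
  rintro _ ⟨j, hj, rfl⟩
  exact ⟨⟨j, Nat.lt_succ_of_lt hj⟩, hj, by simp [show (j : ℕ) < i from hj]⟩

section

variable {ι : Type*} [Fintype ι] [LinearOrder ι]

theorem Submodule.span_image_Iio_le_of_blockTriangular {R M : Type*} [Semiring R]
    [AddCommMonoid M] [Module R M] {L : Matrix ι ι R} (hL : L.BlockTriangular OrderDual.toDual)
    {f g : ι → M} (hfg : ∀ j, f j = ∑ s, L j s • g s) (i : ι) :
    span R (f '' Iio i) ≤ span R (g '' Iio i) := by
  rw [span_le]
  rintro _ ⟨j, hj, rfl⟩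
  rw [hfg]
  refine sum_mem fun s _ => ?_
  rcases lt_or_ge j s with hjs | hsj
  · rw [hL hjs, zero_smul]
    exact zero_mem _
  · exact smul_mem _ _ (subset_span ⟨s, hsj.trans_lt hj, rfl⟩)

variable {E : Type*} [NormedAddCommGroup E] [InnerProductSpace ℝ E] [FiniteDimensional ℝ E]

theorem starProjection_orthogonal_span_Iio_of_orthonormal {u f : ι → E} (hu : Orthonormal ℝ u)
    {L : Matrix ι ι ℝ} (hL : L.BlockTriangular OrderDual.toDual) (hdet : IsUnit L.det)
    (hfu : ∀ j, f j = ∑ s, L j s • u s) (i : ι) :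
    (span ℝ (f '' Iio i))ᗮ.starProjection (f i) = L i i • u i := by
  have := L.invertibleOfIsUnitDet hdet
  have hspan : span ℝ (f '' Iio i) = span ℝ (u '' Iio i) :=
    (span_image_Iio_le_of_blockTriangular hL hfu i).antisymm
      (span_image_Iio_le_of_blockTriangular (blockTriangular_inv_of_blockTriangular hL)
        (fun j => by simp only [hfu, sum_smul_sum_smul_of_mul_eq_one (inv_mul_of_invertible L)]) i)
  have hrest : f i - L i i • u i ∈ span ℝ (u '' Iio i) := by
    rw [hfu, ← Finset.add_sum_erase _ _ (Finset.mem_univ i), add_sub_cancel_left]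
    refine sum_mem fun s hs => ?_
    rcases lt_or_gt_of_ne (Finset.ne_of_mem_erase hs) with hsi | his
    · exact smul_mem _ _ (subset_span ⟨s, hsi, rfl⟩)
    · rw [hL his, zero_smul]
      exact zero_mem _
  rw [hspan]
  exact eq_starProjection_of_mem_orthogonal'
    (smul_mem _ _ (hu.mem_orthogonal_span_image (lt_irrefl i)))
    (le_orthogonal_orthogonal _ hrest) (add_sub_cancel _ _).symm

theorem norm_starProjection_orthogonal_span_Iio_of_gram_eq {f : ι → E} {L : Matrix ι ι ℝ}
    (hL : L.BlockTriangular OrderDual.toDual) (hdet : IsUnit L.det) (hgram : gram ℝ f = L * Lᵀ)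
    (i : ι) : ‖(span ℝ (f '' Iio i))ᗮ.starProjection (f i)‖ = |L i i| := by
  have := L.invertibleOfIsUnitDet hdet
  set u : ι → E := fun j => ∑ s, L⁻¹ j s • f s
  have hu : Orthonormal ℝ u := by
    rw [← gram_eq_one_iff_orthonormal, gram_sum_smul, hgram, transpose_nonsing_inv,
      ← Matrix.mul_assoc, inv_mul_of_invertible, Matrix.one_mul, mul_inv_of_invertible]
  have hfu : ∀ j, f j = ∑ s, L j s • u s := fun j =>
    (sum_smul_sum_smul_of_mul_eq_one (mul_inv_of_invertible L) f j).symm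
  rw [starProjection_orthogonal_span_Iio_of_orthonormal hu hL hdet hfu, norm_smul,
    hu.norm_eq_one, mul_one, Real.norm_eq_abs]

end

theorem shortest_projected_vector_minimizes_cholesky_diag_general {M : ℕ}
    (G : Matrix (Fin M) (Fin M) ℝ) (hG : IsUnit G.det)
    (A : Matrix (Fin M) (Fin M) ℤ)
    -- f_i = Gᵀ a_i, with a_iᵀ the i-th row of A
    (f : Fin M → EuclideanSpace ℝ (Fin M))
    (hf : ∀ i, f i = toE ((G.transpose).mulVec (fun t => ((A i t : ℤ) : ℝ))))
    (i : Fin M)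
    -- P_i(f_i) is a shortest nonzero vector in P_i(Λ(Gᵀ))
    (hshort : ∀ z : Fin M → ℤ,
      projPerp f i (toE ((G.transpose).mulVec (fun t => (z t : ℝ)))) ≠ 0 →
      ‖projPerp f i (f i)‖ ≤ ‖projPerp f i (toE ((G.transpose).mulVec (fun t => (z t : ℝ))))‖)
    -- L is the Cholesky factor of A G Gᵀ Aᵀ
    (L : Matrix (Fin M) (Fin M) ℝ)
    (hLtri : ∀ a b : Fin M, a < b → L a b = 0)
    (hLdiag : ∀ a : Fin M, 0 < L a a)
    (hchol : (A.map (Int.cast : ℤ → ℝ)) * (G * G.transpose)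
        * (A.map (Int.cast : ℤ → ℝ)).transpose = L * L.transpose) :
    -- a_i minimizes ‖P_i(Gᵀ a)‖² over integer vectors a keeping a_1,…,a_{i-1},a independent
    (∀ a : Fin M → ℤ,
      LinearIndependent ℝ (fun j : Fin (i.val + 1) =>
        if h : (j : ℕ) < i.val then (fun t => ((A ⟨j, h.trans i.isLt⟩ t : ℤ) : ℝ))
        else (fun t => ((a t : ℤ) : ℝ))) →
      ‖projPerp f i (f i)‖^2
        ≤ ‖projPerp f i (toE ((G.transpose).mulVec (fun t => (a t : ℝ))))‖^2) ∧
    -- and consequently ℓ_ii² = ‖P_i(Gᵀ a_i)‖²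
    (L i i)^2 = ‖projPerp f i (f i)‖^2 := by
  set m : (Fin M → ℝ) →ₗ[ℝ] EuclideanSpace ℝ (Fin M) :=
    (WithLp.linearEquiv 2 ℝ (Fin M → ℝ)).symm.toLinearMap ∘ₗ Gᵀ.mulVecLin
  have hm_inj : Function.Injective m :=
    (WithLp.linearEquiv 2 ℝ _).symm.injective.comp
      (mulVec_injective_iff_isUnit.2 ((isUnit_transpose _).2 ((isUnit_iff_isUnit_det G).2 hG)))
  have hfm : f = m ∘ fun j t => (A j t : ℝ) := funext hf
  refine ⟨fun a ha => ?_, ?_⟩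
  · have hproj : projPerp f i (m fun t => (a t : ℝ)) ≠ 0 := by
      rw [projPerp, ← starProjection_apply, Ne, starProjection_apply_eq_zero_iff,
        orthogonal_orthogonal, hfm, Set.image_comp, apply_mem_span_image_iff_mem_span hm_inj]
      exact notMem_span_image_Iio_of_linearIndependent _ i _ ha
    exact pow_le_pow_left₀ (norm_nonneg _) (hshort a hproj) 2
  · have hL : L.BlockTriangular OrderDual.toDual := hLtri
    have hdet : IsUnit L.det := by
      rw [det_of_isLowerTriangular L hL]
      exact (Finset.prod_pos fun j _ => hLdiag j).ne'.isUnit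
    have hgram : gram ℝ f = L * Lᵀ := by
      have hrows : f = fun j => WithLp.toLp 2 ((A.map (Int.cast : ℤ → ℝ) * G) j) :=
        funext fun j => by rw [hf, mulVec_transpose]; rfl
      rw [hrows, gram_toLp, Matrix.transpose_mul, ← hchol]
      simp only [Matrix.mul_assoc]
    rw [← sq_abs, ← norm_starProjection_orthogonal_span_Iio_of_gram_eq hL hdet hgram i]
    rfl

theorem shortest_projected_vector_minimizes_cholesky_diag {M : ℕ}
    (G : Matrix (Fin M) (Fin M) ℝ) (hG : IsUnit G.det)
    (A : Matrix (Fin M) (Fin M) ℤ) (hA : A.det ≠ 0)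
    -- f_i = Gᵀ a_i, with a_iᵀ the i-th row of A
    (f : Fin M → EuclideanSpace ℝ (Fin M))
    (hf : ∀ i, f i = toE ((G.transpose).mulVec (fun t => ((A i t : ℤ) : ℝ))))
    (i : Fin M)
    -- P_i(f_i) is a shortest nonzero vector in P_i(Λ(Gᵀ))
    (hshort : ∀ z : Fin M → ℤ,
      projPerp f i (toE ((G.transpose).mulVec (fun t => (z t : ℝ)))) ≠ 0 →
      ‖projPerp f i (f i)‖ ≤ ‖projPerp f i (toE ((G.transpose).mulVec (fun t => (z t : ℝ))))‖)
    -- L is the Cholesky factor of A G Gᵀ Aᵀ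
    (L : Matrix (Fin M) (Fin M) ℝ)
    (hLtri : ∀ a b : Fin M, a < b → L a b = 0)
    (hLdiag : ∀ a : Fin M, 0 < L a a)
    (hchol : (A.map (Int.cast : ℤ → ℝ)) * (G * G.transpose)
        * (A.map (Int.cast : ℤ → ℝ)).transpose = L * L.transpose) :
    -- a_i minimizes ‖P_i(Gᵀ a)‖² over integer vectors a keeping a_1,…,a_{i-1},a independent
    (∀ a : Fin M → ℤ,
      LinearIndependent ℝ (fun j : Fin (i.val + 1) =>
        if h : (j : ℕ) < i.val then (fun t => ((A ⟨j, h.trans i.isLt⟩ t : ℤ) : ℝ))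
        else (fun t => ((a t : ℤ) : ℝ))) →
      ‖projPerp f i (f i)‖^2
        ≤ ‖projPerp f i (toE ((G.transpose).mulVec (fun t => (a t : ℝ))))‖^2) ∧
    -- and consequently ℓ_ii² = ‖P_i(Gᵀ a_i)‖²
    (L i i)^2 = ‖projPerp f i (f i)‖^2 :=
  shortest_projected_vector_minimizes_cholesky_diag_general G hG A f hf i hshort L hLtri hLdiag
    hchol
end
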